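/- Let p, q, s : ℝⁿ → [1,∞] be measurable with 1/s = 1/p + 1/q pointwise. Then ‖fg‖_{s(·)} ≲ ‖f‖_{p(·)} ‖g‖_{q(·)} for all f ∈ L^{p(·)} and g ∈ L^{q(·)}. -/

import Mathlib

open MeasureTheory ENNReal Filter
open scoped SchwartzMap FourierTransform

noncomputable section

/-- Euclidean space ℝⁿ. -/
abbrev En (n : ℕ) := EuclideanSpace ℝ (Fin n)

/-- `ω_p(t)`: `t^p` for finite `p`; for `p = ∞` it is `0` if `t ≤ 1` and `∞` otherwise. -/
def omegaP (p t : ℝ≥0∞) : ℝ≥0∞ :=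
  if p = ∞ then (if t ≤ 1 then 0 else ∞) else t ^ p.toReal

/-- Variable exponent modular `ρ_{p(·)}` on nonnegative (ℝ≥0∞-valued) functions. -/
def rhoP {n : ℕ} (p : En n → ℝ≥0∞) (F : En n → ℝ≥0∞) : ℝ≥0∞ :=
  ∫⁻ x, omegaP (p x) (F x)

/-- Luxemburg norm for the variable exponent Lebesgue space. -/
def luxNorm {n : ℕ} (p : En n → ℝ≥0∞) (F : En n → ℝ≥0∞) : ℝ≥0∞ :=
  sInf {l : ℝ≥0∞ | 0 < l ∧ rhoP p (fun x => F x / l) ≤ 1}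

/-- The nonnegative absolute value of a real function, as an ℝ≥0∞-valued function. -/
def nnAbs {n : ℕ} (f : En n → ℝ) : En n → ℝ≥0∞ := fun x => ENNReal.ofReal |f x|

/-- Modular of the mixed Lebesgue-sequence space `ℓ^{q(·)}(L^{p(·)})`
(convention `λ^{1/∞} = λ^0 = 1`). -/
def mixedModular {n : ℕ} (q p : En n → ℝ≥0∞) (F : ℕ → En n → ℝ≥0∞) : ℝ≥0∞ :=
  ∑' j, sInf {l : ℝ≥0∞ | 0 < l ∧ rhoP p (fun x => F j x / l ^ ((q x)⁻¹).toReal) ≤ 1}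

/-- Quasi-norm of the mixed Lebesgue-sequence space `ℓ^{q(·)}(L^{p(·)})`. -/
def mixedNorm {n : ℕ} (q p : En n → ℝ≥0∞) (F : ℕ → En n → ℝ≥0∞) : ℝ≥0∞ :=
  sInf {m : ℝ≥0∞ | 0 < m ∧ mixedModular q p (fun j x => F j x / m) ≤ 1}

/-- `g` is locally log-Hölder continuous with constant `c`. -/
def LocLogHolder {n : ℕ} (c : ℝ) (g : En n → ℝ) : Prop :=
  0 < c ∧ ∀ x y : En n, |g x - g y| ≤ c / Real.log (Real.exp 1 + 1 / ‖x - y‖)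

/-- `g ∈ C^log_loc(ℝⁿ)`. -/
def ClogLoc {n : ℕ} (g : En n → ℝ) : Prop := ∃ c, LocLogHolder c g

/-- `g` is globally log-Hölder continuous: locally log-Hölder plus the log-Hölder
decay condition at infinity. -/
def GlobLogHolder {n : ℕ} (g : En n → ℝ) : Prop :=
  ClogLoc g ∧ ∃ c g_inf : ℝ, 0 < c ∧ ∀ x : En n, |g x - g_inf| ≤ c / Real.log (Real.exp 1 + ‖x‖)

/-- A measurable variable exponent `p : ℝⁿ → [1,∞]`. -/
def IsExponent {n : ℕ} (p : En n → ℝ≥0∞) : Prop := Measurable p ∧ ∀ x, 1 ≤ p x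

/-- `p ∈ 𝒫^log(ℝⁿ)`: a variable exponent with `1/p` globally log-Hölder continuous. -/
def Plog {n : ℕ} (p : En n → ℝ≥0∞) : Prop :=
  IsExponent p ∧ GlobLogHolder (fun x => ((p x)⁻¹).toReal)

/-- Convolution of two real functions. -/
def conv {n : ℕ} (φ f : En n → ℝ) (x : En n) : ℝ := ∫ y, φ (x - y) * f y

/-- Partial derivative in the `k`-th coordinate direction. -/
def pderiv {n : ℕ} (k : Fin n) (f : En n → ℝ) (x : En n) : ℝ :=
  fderiv ℝ f x (EuclideanSpace.single k 1)

/-- Besov quasi-norm with variable smoothness and integrability, relative to a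
system `(φ_j)_j`. -/
def besovNorm {n : ℕ} (φ : ℕ → En n → ℝ) (s : En n → ℝ) (q p : En n → ℝ≥0∞)
    (g : En n → ℝ) : ℝ≥0∞ :=
  mixedNorm q p (fun j x => ENNReal.ofReal ((2:ℝ) ^ ((j:ℝ) * s x) * |conv (φ j) g x|))

/-- A smooth dyadic resolution of unity `(ℱφ_j)_j`. -/
structure DyadicResolution (n : ℕ) where
  φ : ℕ → 𝓢(En n, ℝ)
  supp_zero : ∀ ξ : En n, 2 < ‖ξ‖ → 𝓕 (fun y => (φ 0 y : ℂ)) ξ = 0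
  supp_pos : ∀ j : ℕ, 0 < j → ∀ ξ : En n,
      (‖ξ‖ < (2:ℝ) ^ ((j:ℤ) - 1) ∨ (2:ℝ) ^ ((j:ℤ) + 1) < ‖ξ‖) →
      𝓕 (fun y => (φ j y : ℂ)) ξ = 0
  sum_one : ∀ ξ : En n, ∑' j, 𝓕 (fun y => (φ j y : ℂ)) ξ = 1

/-- The commutator `[V·∇, Δ_j]f` relative to a convolution kernel `φj`. -/
def commVf {n : ℕ} (φj : En n → ℝ) (V : Fin n → En n → ℝ) (f : En n → ℝ)
    (x : En n) : ℝ :=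
  ∑ k, (V k x * pderiv k (conv φj f) x - conv φj (fun y => V k y * pderiv k f y) x)

end

/-!
The pointwise Young inequality `ω_s(ab) ≤ ω_p(a) + ω_q(b)` (the classical one for the
conjugate exponents `p/s`, `q/s`, applied to `a^s` and `b^s`) and the convexity bound
`ω_s(t/2) ≤ ω_s(t)/2` show that `ρ_p(f/λ) ≤ 1` and `ρ_q(g/μ) ≤ 1` imply
`ρ_s(fg/(2λμ)) ≤ 1`, so `‖fg‖_{s(·)} ≤ 2 λ μ`; taking infima gives the inequality with
constant `2`. Taking infima of a product in `ℝ≥0∞` breaks down only for `0 · ∞`, and that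
case is settled by Chebyshev's inequality: a vanishing Luxemburg norm forces `f = 0` a.e.
-/

namespace ENNReal

theorem mul_rpow_le_rpow_add_rpow (a b : ℝ≥0∞) {p q s : ℝ} (hs : 0 < s) (hp : 0 < p)
    (hq : 0 < q) (h : s⁻¹ = p⁻¹ + q⁻¹) : (a * b) ^ s ≤ a ^ p + b ^ q := by
  have hsp : 1 < p / s := by
    rw [one_lt_div hs, ← inv_lt_inv₀ hp hs, h]; exact lt_add_of_pos_right _ (inv_pos.2 hq)
  have hsq : 1 < q / s := by
    rw [one_lt_div hs, ← inv_lt_inv₀ hq hs, h]; exact lt_add_of_pos_left _ (inv_pos.2 hp)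
  have hconj : (p / s).HolderConjugate (q / s) := by
    rw [Real.holderConjugate_iff, inv_div, inv_div]
    refine ⟨hsp, ?_⟩
    field_simp at h ⊢; linarith
  calc (a * b) ^ s = a ^ s * b ^ s := mul_rpow_of_nonneg _ _ hs.le
    _ ≤ (a ^ s) ^ (p / s) / .ofReal (p / s) + (b ^ s) ^ (q / s) / .ofReal (q / s) :=
      young_inequality _ _ hconj
    _ ≤ (a ^ s) ^ (p / s) + (b ^ s) ^ (q / s) := by
      gcongr
      · exact div_le_of_le_mul (le_mul_of_one_le_right' (one_le_ofReal.2 hsp.le))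
      · exact div_le_of_le_mul (le_mul_of_one_le_right' (one_le_ofReal.2 hsq.le))
    _ = a ^ p + b ^ q := by
      rw [← rpow_mul, ← rpow_mul, mul_div_cancel₀ _ hs.ne', mul_div_cancel₀ _ hs.ne']

end ENNReal

section omegaP

variable {P Q S a b t : ℝ≥0∞}

theorem omegaP_zero (hP : P ≠ 0) : omegaP P 0 = 0 := by
  by_cases hPt : P = ∞
  · simp [omegaP, hPt]
  · simp [omegaP, hPt, ENNReal.toReal_pos hP hPt]

theorem omegaP_mono (P : ℝ≥0∞) : Monotone (omegaP P) := by
  intro t u htu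
  by_cases hPt : P = ∞
  · by_cases hu : u ≤ 1
    · simp [omegaP, hPt, hu, htu.trans hu]
    · simp [omegaP, hPt, hu]
  · simp only [omegaP, hPt, if_false]
    exact ENNReal.rpow_le_rpow htu ENNReal.toReal_nonneg

theorem le_omegaP (hP : 1 ≤ P) (ht : 1 < t) : t ≤ omegaP P t := by
  by_cases hPt : P = ∞
  · simp [omegaP, hPt, not_le.2 ht]
  · simp only [omegaP, hPt, if_false]
    exact ENNReal.le_rpow_self_of_one_le ht.le (by simpa using ENNReal.toReal_mono hPt hP)

theorem omegaP_div_two_le (hP : 1 ≤ P) : omegaP P (t / 2) ≤ omegaP P t / 2 := by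
  by_cases hPt : P = ∞
  · by_cases ht : t ≤ 1
    · simp [omegaP, hPt, ht, ENNReal.half_le_self.trans ht]
    · simp [omegaP, hPt, ht, ENNReal.top_div_of_lt_top]
  · have hPr : 1 ≤ P.toReal := by simpa using ENNReal.toReal_mono hPt hP
    simp only [omegaP, hPt, if_false]
    rw [ENNReal.div_rpow_of_nonneg _ _ (zero_le_one.trans hPr)]
    gcongr
    calc (2 : ℝ≥0∞) = 2 ^ (1 : ℝ) := (ENNReal.rpow_one 2).symm
      _ ≤ 2 ^ P.toReal := ENNReal.rpow_le_rpow_of_exponent_le one_le_two hPr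

theorem omegaP_mul_le_add_of_eq_top (hP : P = ∞) (h : S⁻¹ = P⁻¹ + Q⁻¹) :
    omegaP S (a * b) ≤ omegaP P a + omegaP Q b := by
  obtain rfl : S = Q := by simpa [hP] using h
  by_cases ha : a ≤ 1
  · exact (omegaP_mono S (mul_le_of_le_one_left' ha)).trans le_add_self
  · simp [omegaP, hP, ha]

theorem omegaP_mul_le_add (hP : P ≠ 0) (hQ : Q ≠ 0) (h : S⁻¹ = P⁻¹ + Q⁻¹) :
    omegaP S (a * b) ≤ omegaP P a + omegaP Q b := by
  by_cases hPt : P = ∞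
  · exact omegaP_mul_le_add_of_eq_top hPt h
  by_cases hQt : Q = ∞
  · rw [add_comm, mul_comm]
    exact omegaP_mul_le_add_of_eq_top hQt (h.trans (add_comm _ _))
  have hS : S ≠ 0 := by
    rw [← ENNReal.inv_ne_top, h]
    exact ENNReal.add_ne_top.2 ⟨ENNReal.inv_ne_top.2 hP, ENNReal.inv_ne_top.2 hQ⟩
  have hSt : S ≠ ∞ := by
    rw [← ENNReal.inv_ne_zero, h]
    exact (add_pos_of_pos_of_nonneg (ENNReal.inv_pos.2 hPt) zero_le).ne'
  have hrel : S.toReal⁻¹ = P.toReal⁻¹ + Q.toReal⁻¹ := by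
    rw [← ENNReal.toReal_inv, ← ENNReal.toReal_inv, ← ENNReal.toReal_inv, h,
      ENNReal.toReal_add (ENNReal.inv_ne_top.2 hP) (ENNReal.inv_ne_top.2 hQ)]
  simp only [omegaP, hPt, hQt, hSt, if_false]
  exact ENNReal.mul_rpow_le_rpow_add_rpow a b (ENNReal.toReal_pos hS hSt)
    (ENNReal.toReal_pos hP hPt) (ENNReal.toReal_pos hQ hQt) hrel

theorem measurable_omegaP {α : Type*} [MeasurableSpace α] {p F : α → ℝ≥0∞}
    (hp : Measurable p) (hF : Measurable F) : Measurable fun x => omegaP (p x) (F x) :=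
  Measurable.ite (hp (measurableSet_singleton ∞))
    (Measurable.ite (measurableSet_le hF measurable_const) measurable_const measurable_const)
    (hF.pow hp.ennreal_toReal)

end omegaP

section Luxemburg

variable {n : ℕ} {p q s F G H : En n → ℝ≥0∞}

theorem rhoP_mul_div_two_le (hp : IsExponent p) (hq : ∀ x, 1 ≤ q x) (hs : ∀ x, 1 ≤ s x)
    (h : ∀ x, (s x)⁻¹ = (p x)⁻¹ + (q x)⁻¹) (hF : Measurable F) :
    rhoP s (fun x => F x * G x / 2) ≤ (rhoP p F + rhoP q G) / 2 := by
  calc rhoP s (fun x => F x * G x / 2)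
      ≤ ∫⁻ x, (omegaP (p x) (F x) + omegaP (q x) (G x)) / 2 := by
        refine lintegral_mono fun x => (omegaP_div_two_le (hs x)).trans ?_
        gcongr
        exact omegaP_mul_le_add (zero_lt_one.trans_le (hp.2 x)).ne'
          (zero_lt_one.trans_le (hq x)).ne' (h x)
    _ = (rhoP p F + rhoP q G) / 2 := by
        simp only [div_eq_mul_inv]
        rw [lintegral_mul_const' _ _ (by simp), lintegral_add_left (measurable_omegaP hp.1 hF)]
        rfl

theorem luxNorm_mul_le_of_rhoP_le_one (hp : IsExponent p) (hq : ∀ x, 1 ≤ q x)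
    (hs : ∀ x, 1 ≤ s x) (h : ∀ x, (s x)⁻¹ = (p x)⁻¹ + (q x)⁻¹) (hF : Measurable F)
    {l m : ℝ≥0∞} (hl : l ≠ 0) (hm : m ≠ 0) (hFl : rhoP p (fun x => F x / l) ≤ 1)
    (hGm : rhoP q (fun x => G x / m) ≤ 1) :
    luxNorm s (fun x => F x * G x) ≤ 2 * (l * m) := by
  refine sInf_le ⟨by positivity, ?_⟩
  have hsplit : (fun x => F x * G x / (2 * (l * m))) = fun x => F x / l * (G x / m) / 2 := by
    ext x
    simp only [div_eq_mul_inv, ENNReal.mul_inv (Or.inl two_ne_zero) (Or.inl ENNReal.ofNat_ne_top),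
      ENNReal.mul_inv (Or.inl hl) (Or.inr hm)]
    ring
  calc rhoP s (fun x => F x * G x / (2 * (l * m)))
      ≤ (rhoP p (fun x => F x / l) + rhoP q (fun x => G x / m)) / 2 :=
        hsplit ▸ rhoP_mul_div_two_le hp hq hs h (hF.div_const l)
    _ ≤ (1 + 1) / 2 := by gcongr
    _ = 1 := by rw [one_add_one_eq_two, ENNReal.div_self two_ne_zero ENNReal.ofNat_ne_top]

theorem measure_lt_mul_le_of_rhoP_le_one (hp : IsExponent p) (hF : Measurable F)
    {c l : ℝ≥0∞} (hl : l ≠ 0) (hlc : l < c) (hFl : rhoP p (fun x => F x / l) ≤ 1) :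
    volume {x | c < F x} * c ≤ l := by
  have hlt : l ≠ ∞ := (hlc.trans_le le_top).ne
  have hcl : 1 < c / l := by rwa [ENNReal.lt_div_iff_mul_lt (Or.inl hl) (Or.inl hlt), one_mul]
  have hsub : {x | c < F x} ⊆ {x | c / l ≤ omegaP (p x) (F x / l)} := fun x hx =>
    have hx' : c / l < F x / l := ENNReal.div_lt_div_right hl hlt hx
    hx'.le.trans (le_omegaP (hp.2 x) (hcl.trans hx'))
  have hcheb : c / l * volume {x | c < F x} ≤ 1 :=
    calc c / l * volume {x | c < F x}
        ≤ c / l * volume {x | c / l ≤ omegaP (p x) (F x / l)} := by gcongr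
      _ ≤ rhoP p (fun x => F x / l) :=
        mul_meas_ge_le_lintegral₀ (measurable_omegaP hp.1 (hF.div_const l)).aemeasurable _
      _ ≤ 1 := hFl
  calc volume {x | c < F x} * c = c / l * volume {x | c < F x} * l := by
        rw [mul_comm (c / l), mul_assoc, ENNReal.div_mul_cancel hl hlt]
    _ ≤ 1 * l := by gcongr
    _ = l := one_mul l

theorem measure_lt_mul_le_luxNorm (hp : IsExponent p) (hF : Measurable F) {c : ℝ≥0∞}
    (hc : luxNorm p F < c) : volume {x | c < F x} * c ≤ luxNorm p F := by
  refine le_of_forall_gt_imp_ge_of_dense fun r hr => ?_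
  obtain ⟨l, ⟨hl, hFl⟩, hlrc⟩ := sInf_lt_iff.1 (lt_min hr hc)
  exact (measure_lt_mul_le_of_rhoP_le_one hp hF hl.ne' (hlrc.trans_le (min_le_right _ _)) hFl).trans
    (hlrc.trans_le (min_le_left _ _)).le

theorem ae_eq_zero_of_luxNorm_eq_zero (hp : IsExponent p) (hF : Measurable F)
    (h0 : luxNorm p F = 0) : ∀ᵐ x, F x = 0 := by
  have hnull : ∀ k : ℕ, volume {x | (k : ℝ≥0∞)⁻¹ < F x} = 0 := fun k => by
    have hk : (k : ℝ≥0∞)⁻¹ ≠ 0 := ENNReal.inv_ne_zero.2 (ENNReal.natCast_ne_top k)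
    have := measure_lt_mul_le_luxNorm hp hF (h0 ▸ pos_iff_ne_zero.2 hk)
    rwa [h0, nonpos_iff_eq_zero, mul_eq_zero, or_iff_left hk] at this
  filter_upwards [ae_all_iff.2 fun k => measure_eq_zero_iff_ae_notMem.1 (hnull k)] with x hx
  by_contra hne
  obtain ⟨k, hk⟩ := ENNReal.exists_inv_nat_lt hne
  exact hx k hk

theorem luxNorm_eq_zero_of_ae_eq_zero (hs : ∀ x, s x ≠ 0) (h0 : ∀ᵐ x, H x = 0) :
    luxNorm s H = 0 := by
  have hρ : ∀ l, rhoP s (fun x => H x / l) = 0 := fun l => by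
    rw [rhoP, ← lintegral_zero]
    exact lintegral_congr_ae (h0.mono fun x hx => by simp [hx, omegaP_zero (hs x)])
  have hIoi : Set.Ioi 0 ⊆ {l | 0 < l ∧ rhoP s (fun x => H x / l) ≤ 1} :=
    fun l hl => ⟨hl, (hρ l).trans_le zero_le_one⟩
  exact nonpos_iff_eq_zero.1 ((sInf_le_sInf hIoi).trans isGLB_Ioi.sInf_eq.le)

theorem luxNorm_mul_le_of_ne_top (hp : IsExponent p) (hq : ∀ x, 1 ≤ q x)
    (hs : ∀ x, 1 ≤ s x) (h : ∀ x, (s x)⁻¹ = (p x)⁻¹ + (q x)⁻¹) (hF : Measurable F)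
    (hFt : luxNorm p F ≠ ∞) (hGt : luxNorm q G ≠ ∞) :
    luxNorm s (fun x => F x * G x) ≤ 2 * luxNorm p F * luxNorm q G := by
  have hfin : ∀ {r K : En n → ℝ≥0∞}, luxNorm r K ≠ ∞ →
      ∃ l : {l // 0 < l ∧ rhoP r (fun x => K x / l) ≤ 1}, (l : ℝ≥0∞) ≠ ∞ := fun hK => by
    obtain ⟨l, hl, hlt⟩ := sInf_lt_iff.1 (lt_top_iff_ne_top.2 hK)
    exact ⟨⟨l, hl⟩, hlt.ne⟩
  rw [mul_assoc, mul_comm, ← ENNReal.div_le_iff_le_mul (Or.inl two_ne_zero)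
    (Or.inl ENNReal.ofNat_ne_top), show luxNorm p F = _ from sInf_eq_iInf' _,
    show luxNorm q G = _ from sInf_eq_iInf' _]
  exact ENNReal.le_iInf_mul_iInf (hfin hFt) (hfin hGt) fun l m => ENNReal.div_le_of_le_mul'
    (luxNorm_mul_le_of_rhoP_le_one hp hq hs h hF l.2.1.ne' m.2.1.ne' l.2.2 m.2.2)

theorem luxNorm_mul_le (hp : IsExponent p) (hq : IsExponent q) (hs : ∀ x, 1 ≤ s x)
    (h : ∀ x, (s x)⁻¹ = (p x)⁻¹ + (q x)⁻¹) (hF : Measurable F) (hG : Measurable G) :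
    luxNorm s (fun x => F x * G x) ≤ 2 * luxNorm p F * luxNorm q G := by
  have hs0 : ∀ x, s x ≠ 0 := fun x => (zero_lt_one.trans_le (hs x)).ne'
  by_cases hFt : luxNorm p F = ∞
  · obtain hG0 | hG0 := eq_or_ne (luxNorm q G) 0
    · rw [luxNorm_eq_zero_of_ae_eq_zero hs0
        ((ae_eq_zero_of_luxNorm_eq_zero hq hG hG0).mono fun x hx => by simp [hx])]
      exact zero_le
    · simp [hFt, hG0]
  by_cases hGt : luxNorm q G = ∞
  · obtain hF0 | hF0 := eq_or_ne (luxNorm p F) 0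
    · rw [luxNorm_eq_zero_of_ae_eq_zero hs0
        ((ae_eq_zero_of_luxNorm_eq_zero hp hF hF0).mono fun x hx => by simp [hx])]
      exact zero_le
    · simp [hGt, hF0]
  exact luxNorm_mul_le_of_ne_top hp hq.2 hs h hF hFt hGt

end Luxemburg

theorem nnAbs_mul {n : ℕ} (f g : En n → ℝ) :
    nnAbs (fun x => f x * g x) = fun x => nnAbs f x * nnAbs g x := by
  ext x
  simp [nnAbs, abs_mul, ENNReal.ofReal_mul (abs_nonneg (f x))]

theorem measurable_nnAbs {n : ℕ} {f : En n → ℝ} (hf : Measurable f) : Measurable (nnAbs f) :=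
  hf.abs.ennreal_ofReal

/-- Hölder's inequality in variable exponent Lebesgue spaces. -/
theorem stmt8 {n : ℕ} (p q s : En n → ℝ≥0∞)
    (hp : IsExponent p) (hq : IsExponent q) (hs : IsExponent s)
    (h : ∀ x, (s x)⁻¹ = (p x)⁻¹ + (q x)⁻¹) :
    ∃ c : ℝ≥0∞, c ≠ ∞ ∧ ∀ f g : En n → ℝ, Measurable f → Measurable g →
      luxNorm s (nnAbs (fun x => f x * g x)) ≤ c * luxNorm p (nnAbs f) * luxNorm q (nnAbs g) := by
  refine ⟨2, ENNReal.ofNat_ne_top, fun f g hf hg => ?_⟩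
  rw [nnAbs_mul]
  exact luxNorm_mul_le hp hq hs.2 h (measurable_nnAbs hf) (measurable_nnAbs hg)
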